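/- arXiv:math/0611717 — 2 statements merged into one kernel-verified Lean document; each statement's English description precedes it below -/
import Mathlib

section
/- Let f be a graph invariant with values in a commutative ring R satisfying the deletion-contraction relation f(G) = A·f(G/e) + B·f(G−e) for e neither a loop nor an isthmus, f(H·K) = C·f(H)·f(K) for one-point unions, f(T₁) = D, and f(L₁) = E. Then for the graph Dₙ consisting of two vertices joined by n parallel edges (n ≥ 1), (B − C·E)·f(Dₙ) = B^{n−1}·D·(B − C·E) + A·E·(B^{n−1} − (C·E)^{n−1}). -/
/-- A finite multigraph (loops and parallel edges allowed), with a chosen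
orientation of each edge given by source and target maps. -/
structure Multigraph where
  V : Type
  E : Type
  [fintypeV : Fintype V]
  [fintypeE : Fintype E]
  [decEqV : DecidableEq V]
  [decEqE : DecidableEq E]
  src : E → V
  tgt : E → V

attribute [instance] Multigraph.fintypeV Multigraph.fintypeE
  Multigraph.decEqV Multigraph.decEqE

namespace Multigraph

variable (G : Multigraph)

/-- Two vertices are directly joined by an edge of the spanning subgraph `[G:S]`. -/
def connRel (S : Finset G.E) (a b : G.V) : Prop :=
  ∃ e ∈ S, (G.src e = a ∧ G.tgt e = b)

/-- The "same connected component of `[G:S]`" equivalence relation. -/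
def connSetoid (S : Finset G.E) : Setoid G.V := Relation.EqvGen.setoid (G.connRel S)

/-- The set of connected components of the spanning subgraph `[G:S]`. -/
def Comp (S : Finset G.E) : Type := Quotient (G.connSetoid S)

noncomputable instance (S : Finset G.E) : Fintype (G.Comp S) := by
  classical exact Quotient.fintype _

noncomputable instance (S : Finset G.E) : DecidableEq (G.Comp S) :=
  Classical.decEq _

/-- `b₀([G:S])`: the number of connected components of the spanning subgraph `[G:S]`. -/
noncomputable def b0 (S : Finset G.E) : ℕ := Fintype.card (G.Comp S)

/-- The simplicial boundary map `ℚ^S → ℚ^V`, sending an edge to (target − source). -/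
noncomputable def boundary (S : Finset G.E) : ((↥S) → ℚ) →ₗ[ℚ] (G.V → ℚ) :=
  ∑ e : ↥S, LinearMap.smulRight (LinearMap.proj e)
    (fun v => (if G.tgt e.1 = v then (1 : ℚ) else 0) - (if G.src e.1 = v then 1 else 0))

/-- `b₁([G:S])`: the first Betti number of `[G:S]`, i.e. the rank of its cycle space. -/
noncomputable def b1 (S : Finset G.E) : ℕ :=
  Module.finrank ℚ (LinearMap.ker (G.boundary S))

end Multigraph

namespace Multigraph

variable (G : Multigraph)

/-- The graph `G − e` obtained by deleting the edge `e`. -/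
def deleteEdge (e : G.E) : Multigraph where
  V := G.V
  E := {e' : G.E // e' ≠ e}
  src := fun x => G.src x.1
  tgt := fun x => G.tgt x.1

/-- The equivalence relation identifying the two endpoints of `e`. -/
def contractSetoid (e : G.E) : Setoid G.V :=
  Relation.EqvGen.setoid (fun a b => a = G.src e ∧ b = G.tgt e)

/-- The graph `G / e` obtained by contracting the edge `e` to a vertex. -/
noncomputable def contractEdge (e : G.E) : Multigraph where
  V := Quotient (G.contractSetoid e)
  E := {e' : G.E // e' ≠ e}
  fintypeV := by classical exact Quotient.fintype _
  decEqV := Classical.decEq _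
  src := fun x => Quotient.mk (G.contractSetoid e) (G.src x.1)
  tgt := fun x => Quotient.mk (G.contractSetoid e) (G.tgt x.1)

/-- The number of connected components of `G`. -/
noncomputable def b0full : ℕ := G.b0 Finset.univ

/-- `G` is connected. -/
def Connected : Prop := G.b0full = 1

/-- `e` is a loop: it joins a vertex to itself. -/
def IsLoop (e : G.E) : Prop := G.src e = G.tgt e

/-- `e` is an isthmus: deleting it increases the number of connected components. -/
noncomputable def IsIsthmus (e : G.E) : Prop := (G.deleteEdge e).b0full ≠ G.b0full

/-- `G` is a tree: connected and acyclic (`|E| + 1 = |V|`). -/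
def IsTree : Prop := G.Connected ∧ Fintype.card G.E + 1 = Fintype.card G.V

/-- The degree of a vertex (loops counted twice). -/
def degree (v : G.V) : ℕ :=
  (Finset.univ.filter (fun e => G.src e = v)).card +
    (Finset.univ.filter (fun e => G.tgt e = v)).card

/-- `G` is a simple cycle with `n` vertices and `n` edges. -/
def IsCycle (n : ℕ) : Prop :=
  G.Connected ∧ Fintype.card G.V = n ∧ Fintype.card G.E = n ∧ ∀ v, G.degree v = 2

/-- The one-point union `H·K`, obtained from the disjoint union of `H` and `K`
by identifying the vertex `h` of `H` with the vertex `k` of `K`. -/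
def wedge (H K : Multigraph) (h : H.V) (k : K.V) : Multigraph where
  V := H.V ⊕ {v : K.V // v ≠ k}
  E := H.E ⊕ K.E
  src := Sum.elim (fun e => Sum.inl (H.src e))
    (fun e => if hv : K.src e = k then Sum.inl h else Sum.inr ⟨K.src e, hv⟩)
  tgt := Sum.elim (fun e => Sum.inl (H.tgt e))
    (fun e => if hv : K.tgt e = k then Sum.inl h else Sum.inr ⟨K.tgt e, hv⟩)

/-- Isomorphism of multigraphs (edges may be matched with either orientation). -/
def Iso (H : Multigraph) : Prop :=
  ∃ (φ : G.V ≃ H.V) (ψ : G.E ≃ H.E), ∀ e : G.E,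
    (H.src (ψ e) = φ (G.src e) ∧ H.tgt (ψ e) = φ (G.tgt e)) ∨
    (H.src (ψ e) = φ (G.tgt e) ∧ H.tgt (ψ e) = φ (G.src e))

end Multigraph

/-! Deleting an edge of `Dₙ` gives `Dₙ₋₁` and contracting it gives the bouquet of `n − 1`
loops at one vertex; the bouquet is an iterated one-point union of single loops, so its value
is `C^(n−2) E^(n−1)`. Hence `f(Dₙ) = A C^(n−2) E^(n−1) + B f(Dₙ₋₁)`, and multiplying by
`B − C E` turns the resulting geometric sum into a polynomial identity. -/

theorem Relation.eqvGen_of_card_eq_two {α : Type*} [Fintype α] {r : α → α → Prop}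
    (hcard : Fintype.card α = 2) {a b : α} (hab : a ≠ b) (hr : r a b) (x y : α) :
    Relation.EqvGen r x y := by
  classical
  have hto_a : ∀ z, Relation.EqvGen r z a := by
    intro z
    obtain rfl | rfl : z = a ∨ z = b := by
      by_contra! hz
      have h3 := Finset.card_le_univ ({z, a, b} : Finset α)
      rw [Finset.card_insert_of_notMem (by simp [hz.1, hz.2]),
        Finset.card_insert_of_notMem (by simpa using hab), Finset.card_singleton, hcard] at h3
      omega
    · exact .refl _
    · exact .symm _ _ (.rel _ _ hr)
  exact (hto_a x).trans _ _ _ (hto_a y).symm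

theorem Relation.subsingleton_quotient_eqvGen_of_card_eq_two {α : Type*} [Fintype α]
    {r : α → α → Prop} (hcard : Fintype.card α = 2) {a b : α} (hab : a ≠ b) (hr : r a b) :
    Subsingleton (Quotient (Relation.EqvGen.setoid r)) :=
  ⟨Quotient.ind₂ fun x y => Quotient.sound (Relation.eqvGen_of_card_eq_two hcard hab hr x y)⟩

namespace Multigraph

variable (G : Multigraph)

theorem card_deleteEdge_E (e : G.E) :
    Fintype.card (G.deleteEdge e).E = Fintype.card G.E - 1 :=
  (Fintype.card_subtype_compl (· = e)).trans (congrArg _ (Fintype.card_subtype_eq e))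

theorem card_contractEdge_E (e : G.E) :
    Fintype.card (G.contractEdge e).E = Fintype.card G.E - 1 :=
  G.card_deleteEdge_E e

variable {G}

theorem b0full_eq_one_of_card_V_eq_two (hV : Fintype.card G.V = 2) {e : G.E}
    (he : ¬ G.IsLoop e) : G.b0full = 1 :=
  Fintype.card_eq_one_iff.mpr ⟨⟦G.src e⟧, fun _ =>
    (Relation.subsingleton_quotient_eqvGen_of_card_eq_two hV he
      ⟨e, Finset.mem_univ e, rfl, rfl⟩).allEq _ _⟩

theorem not_isIsthmus_of_card_V_eq_two (hV : Fintype.card G.V = 2) {e e' : G.E}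
    (hne : e' ≠ e) (he' : ¬ G.IsLoop e') : ¬ G.IsIsthmus e := by
  have hdel : (G.deleteEdge e).b0full = 1 :=
    b0full_eq_one_of_card_V_eq_two (e := ⟨e', hne⟩) hV he'
  rw [IsIsthmus, hdel, b0full_eq_one_of_card_V_eq_two hV he', not_not]

theorem card_contractEdge_V_of_card_V_eq_two (hV : Fintype.card G.V = 2) {e : G.E}
    (he : ¬ G.IsLoop e) : Fintype.card (G.contractEdge e).V = 1 :=
  Fintype.card_eq_one_iff.mpr ⟨⟦G.src e⟧, fun _ =>
    (Relation.subsingleton_quotient_eqvGen_of_card_eq_two hV he ⟨rfl, rfl⟩).allEq _ _⟩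

def singleLoop : Multigraph where
  V := PUnit
  E := PUnit
  src _ := PUnit.unit
  tgt _ := PUnit.unit

theorem iso_wedge_deleteEdge_singleLoop {e₀ : G.E} (he : G.IsLoop e₀) :
    G.Iso (wedge (G.deleteEdge e₀) singleLoop (G.src e₀) PUnit.unit) := by
  have : IsEmpty {v : singleLoop.V // v ≠ PUnit.unit} := ⟨fun v => v.2 rfl⟩
  let ψ : G.E ≃ (wedge (G.deleteEdge e₀) singleLoop (G.src e₀) PUnit.unit).E :=
    (Equiv.subtypeNeSumPUnit e₀).symm
  refine ⟨(Equiv.sumEmpty G.V _).symm, ψ, fun e => .inl ?_⟩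
  rcases eq_or_ne e e₀ with rfl | h
  · have hψ : ψ e = Sum.inr PUnit.unit :=
      show (Equiv.subtypeNeSumPUnit e).symm e = (.inr PUnit.unit : {i // i ≠ e} ⊕ PUnit) by
        simp
    rw [hψ]
    exact ⟨rfl, he ▸ rfl⟩
  · have hψ : ψ e = Sum.inl ⟨e, h⟩ :=
      show (Equiv.subtypeNeSumPUnit e₀).symm e = (.inl ⟨e, h⟩ : {i // i ≠ e₀} ⊕ PUnit) by
        simp [Equiv.optionSubtypeNe_symm_of_ne h]
    rw [hψ]
    exact ⟨rfl, rfl⟩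

theorem value_of_bouquet {R : Type} [CommRing R] (C E : R) (f : Multigraph → R)
    (hiso : ∀ G H : Multigraph, G.Iso H → f G = f H)
    (hwedge : ∀ (H K : Multigraph) (h : H.V) (k : K.V), f (wedge H K h k) = C * f H * f K)
    (hL1 : ∀ G : Multigraph, Fintype.card G.V = 1 → Fintype.card G.E = 1 → f G = E)
    (m : ℕ) (G : Multigraph) (hV : Fintype.card G.V = 1) (hE : Fintype.card G.E = m + 1) :
    f G = C ^ m * E ^ (m + 1) := by
  induction m generalizing G with
  | zero => simpa using hL1 G hV hE
  | succ m ih =>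
    obtain ⟨e₀⟩ : Nonempty G.E := Fintype.card_pos_iff.mp (by omega)
    have hloop : G.IsLoop e₀ := Fintype.card_le_one_iff.mp hV.le _ _
    have hdel : f (G.deleteEdge e₀) = C ^ m * E ^ (m + 1) :=
      ih _ hV (by rw [card_deleteEdge_E, hE]; rfl)
    rw [hiso _ _ (iso_wedge_deleteEdge_singleLoop hloop),
      hwedge (G.deleteEdge e₀) singleLoop (G.src e₀) PUnit.unit, hdel, hL1 singleLoop rfl rfl]
    ring

end Multigraph

open Multigraph in
/-- For a graph invariant `f` satisfying deletion–contraction, the one-point-union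
rule, `f(T₁) = D` and `f(L₁) = E`, the dipole graph `Dₙ` (two vertices joined by
`n ≥ 1` parallel edges) satisfies
`(B − C·E)·f(Dₙ) = B^(n−1)·D·(B − C·E) + A·E·(B^(n−1) − (C·E)^(n−1))`. -/
theorem value_of_dipole {R : Type} [CommRing R] (A B C D E : R) (f : Multigraph → R)
    (hiso : ∀ G H : Multigraph, G.Iso H → f G = f H)
    (hdc : ∀ (G : Multigraph) (e : G.E), ¬ G.IsLoop e → ¬ G.IsIsthmus e →
      f G = A * f (G.contractEdge e) + B * f (G.deleteEdge e))
    (hwedge : ∀ (H K : Multigraph) (h : H.V) (k : K.V),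
      f (Multigraph.wedge H K h k) = C * f H * f K)
    (hT1 : ∀ G : Multigraph, Fintype.card G.V = 2 → Fintype.card G.E = 1 →
      (∀ e, ¬ G.IsLoop e) → f G = D)
    (hL1 : ∀ G : Multigraph, Fintype.card G.V = 1 → Fintype.card G.E = 1 → f G = E)
    (n : ℕ) (hn : 1 ≤ n) (G : Multigraph)
    (hV : Fintype.card G.V = 2) (hE : Fintype.card G.E = n)
    (hnl : ∀ e, ¬ G.IsLoop e) :
    (B - C * E) * f G
      = B ^ (n - 1) * D * (B - C * E) + A * E * (B ^ (n - 1) - (C * E) ^ (n - 1)) := by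
  induction n, hn using Nat.le_induction generalizing G with
  | base => simp [hT1 G hV hE hnl, mul_comm]
  | succ n hn ih =>
    obtain ⟨m, rfl⟩ : ∃ m, n = m + 1 := Nat.exists_eq_add_of_le' hn
    obtain ⟨e₀⟩ : Nonempty G.E := Fintype.card_pos_iff.mp (by omega)
    have hdelE : Fintype.card (G.deleteEdge e₀).E = m + 1 := by
      rw [card_deleteEdge_E, hE]; rfl
    obtain ⟨e₁⟩ : Nonempty (G.deleteEdge e₀).E := Fintype.card_pos_iff.mp (by omega)
    have hdel := ih (G.deleteEdge e₀) hV hdelE (fun e => hnl e.1)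
    have hcon : f (G.contractEdge e₀) = C ^ m * E ^ (m + 1) :=
      value_of_bouquet C E f hiso hwedge hL1 m _
        (card_contractEdge_V_of_card_V_eq_two hV (hnl e₀))
        (by rw [card_contractEdge_E, hE]; rfl)
    rw [hdc G e₀ (hnl e₀) (not_isIsthmus_of_card_V_eq_two hV e₁.2 (hnl e₁.1)), hcon]
    simp only [Nat.add_sub_cancel] at hdel ⊢
    linear_combination B * hdel
end

section
/- Let G be a finite graph with n edges and fix an ordering of E(G). For each vertex α ∈ {0,1}^n of the cube with corresponding edge subset S_α, set C^α(G) = A^{⊗|S_α|} ⊗ A^{⊗b₀([G:S_α])} ⊗ B^{⊗b₁([G:S_α])} where A = ℤ[t]/(t²) and B = ℤ[w]/(w²), and let C^i(G) = ⊕_{|α|=i} C^α(G) with differential d^i = Σ_{|ξ|=i} sign(ξ) d_ξ built from the per-edge maps (using the multiplication m on A, the unit u: ℤ → A, and u_B: ℤ → B as described). Then d^{i+1} ∘ d^i = 0, i.e., (C^i(G), d^i) is a cochain complex. -/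
/-- The pushforward of free `ℤ`-modules along a partially defined map of bases:
a basis element `a` is sent to `g a` if defined, and to `0` otherwise. -/
noncomputable def pushMap {α β : Type*} [Fintype α] [DecidableEq β]
    (g : α → Option β) : (α → ℤ) →ₗ[ℤ] (β → ℤ) where
  toFun φ b := ∑ a : α, if g a = some b then φ a else 0
  map_add' φ ψ := by
    funext b
    simp only [Pi.add_apply]
    rw [← Finset.sum_add_distrib]
    refine Finset.sum_congr rfl fun a _ => ?_
    by_cases h : g a = some b <;> simp [h]
  map_smul' c φ := by
    funext b
    try dsimp only
    rw [RingHom.id_apply, Pi.smul_apply, smul_eq_mul, Finset.mul_sum]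
    refine Finset.sum_congr rfl fun a _ => ?_
    by_cases h : g a = some b <;> simp [h]

namespace Multigraph

variable (G : Multigraph)

/-- The standard `ℤ`-basis of `C^S(G) = A^{⊗|S|} ⊗ A^{⊗b₀([G:S])} ⊗ B^{⊗b₁([G:S])}`,
where `A = ℤ[t]/(t²)` and `B = ℤ[w]/(w²)`:  a factor of `A` (basis `{1, t}`) for
each edge of `S` and each component of `[G:S]`, and a factor of `B` (basis
`{1, w}`) for each of the `b₁([G:S])` independent cycles.  `false` encodes
`1` and `true` encodes `t` (resp. `w`). -/
abbrev YBasis (S : Finset G.E) : Type :=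
  (↥S → Bool) × (G.Comp S → Bool) × (Fin (G.b1 S) → Bool)

/-- The chain module `C^S(G)`, the free `ℤ`-module on `YBasis G S`. -/
abbrev Cmod (S : Finset G.E) : Type := G.YBasis S → ℤ

/-- The natural map on components induced by `T.erase e ⊆ T`. -/
def compPush (T : Finset G.E) (e : G.E) : G.Comp (T.erase e) → G.Comp T :=
  Quotient.map id (by
    intro a b hab
    refine Relation.EqvGen.mono ?_ _ _ hab
    rintro x y ⟨e', he', hx, hy⟩
    exact ⟨e', Finset.mem_of_mem_erase he', hx, hy⟩)

/-- Multiplication `A ⊗ A → A` along a merging of components, as a partially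
defined map of bases: the result is undefined (`0`) when two merged components
both carry `t` (since `t² = 0`), and otherwise the resulting component carries
`t` iff some preimage component does. -/
noncomputable def mergeMap (T : Finset G.E) (e : G.E)
    (b : G.Comp (T.erase e) → Bool) : Option (G.Comp T → Bool) :=
  if ∃ c c' : G.Comp (T.erase e),
      c ≠ c' ∧ G.compPush T e c = G.compPush T e c' ∧ b c ∧ b c' then
    none
  else
    some fun d => decide (∃ c, G.compPush T e c = d ∧ b c)

/-- Inserting the unit `1 ∈ A` in the tensor factor of the new edge `e`. -/
def edgeExt (T : Finset G.E) (e : G.E) (a : ↥(T.erase e) → Bool) : ↥T → Bool :=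
  fun x => if hx : x.1 = e then false
    else a ⟨x.1, Finset.mem_erase.mpr ⟨hx, x.2⟩⟩

/-- The map `B^{⊗ν₀} → B^{⊗ν₁}` on bases: the identity when `ν₁ = ν₀`, and
appending a unit `1 ∈ B` in a new last factor when `ν₁ = ν₀ + 1`. -/
def cycExt (ν₀ ν₁ : ℕ) (c : Fin ν₀ → Bool) : Fin ν₁ → Bool :=
  fun i => if h : (i : ℕ) < ν₀ then c ⟨i, h⟩ else false

/-- The per-edge map `d_ξ` on bases, for the cube edge `ξ` joining
`S₀ = T.erase e` to `S₁ = T`. -/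
noncomputable def basisStep (T : Finset G.E) (e : G.E) :
    G.YBasis (T.erase e) → Option (G.YBasis T) :=
  fun v => (G.mergeMap T e v.2.1).map
    (fun b' => (G.edgeExt T e v.1, b', cycExt (G.b1 (T.erase e)) (G.b1 T) v.2.2))

/-- The per-edge map `d_ξ : C^{T∖e}(G) → C^T(G)`. -/
noncomputable def stepMap (T : Finset G.E) (e : G.E) :
    G.Cmod (T.erase e) →ₗ[ℤ] G.Cmod T :=
  pushMap (G.basisStep T e)

/-- The `i`-th chain module `C^i(G) = ⊕_{|S| = i} C^S(G)`. -/
abbrev Cchain (i : ℕ) : Type :=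
  (S : {S : Finset G.E // S.card = i}) → G.Cmod S.1

/-- The differential `d^i : C^i(G) → C^{i+1}(G)`, where the edge ordering is
given by an injective labelling `π : E → ℕ`;  the per-edge map for adding the
edge `e` to `S₀` enters with the sign `(−1)^{#{x ∈ S₀ : π x < π e}}`. -/
noncomputable def diff (π : G.E → ℕ) (i : ℕ) :
    G.Cchain i →ₗ[ℤ] G.Cchain (i + 1) :=
  LinearMap.pi fun T =>
    ∑ e ∈ T.1.attach,
      ((-1 : ℤ) ^ (((T.1.erase e.1).filter (fun x => π x < π e.1)).card)) •
        ((G.stepMap T.1 e.1).comp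
          (LinearMap.proj
            (⟨T.1.erase e.1, by
              simp [Finset.card_erase_of_mem e.2, T.2]⟩ :
              {S : Finset G.E // S.card = i})))

end Multigraph

/-!
Every per-edge map is induced by a partial map of the standard bases, and the composite of the
basis maps for `S ⊆ S ∪ {f} ⊆ S ∪ {e, f}` depends only on `S ⊆ S ∪ {e, f}`: merging components
in two steps is merging along the composite map of components, inserting units for two edges
is inserting them at once, and since `b₁` is monotone the `B`-factors are padded by units once.
So the two paths around every square of the cube induce the same map, and their signs are
opposite because exactly one of `e`, `f` precedes the other; `d ∘ d` is a sum of cancelling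
pairs.
-/

theorem pushMap_comp_pushMap {α β γ : Type*} [Fintype α] [Fintype β] [DecidableEq β]
    [DecidableEq γ] (g₁ : α → Option β) (g₂ : β → Option γ) :
    (pushMap g₂).comp (pushMap g₁) = pushMap (fun a => (g₁ a).bind g₂) := by
  ext φ c
  have bind_eq (a : α) : (if (g₁ a).bind g₂ = some c then φ a else 0)
      = ∑ b, if g₁ a = some b then (if g₂ b = some c then φ a else 0) else 0 := by
    cases g₁ a <;> simp
  simp only [LinearMap.comp_apply, pushMap, LinearMap.coe_mk, AddHom.coe_mk, bind_eq]
  rw [Finset.sum_comm]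
  refine Finset.sum_congr rfl fun b _ => ?_
  split_ifs <;> simp [*]

section MergeLabels

variable {X Y Z : Type*} [Fintype X] [DecidableEq X] [DecidableEq Y]

noncomputable def mergeLabels (p : X → Y) (b : X → Bool) : Option (Y → Bool) :=
  if ∃ c c' : X, c ≠ c' ∧ p c = p c' ∧ b c ∧ b c' then none
  else some fun d => decide (∃ c, p c = d ∧ b c)

theorem mergeLabels_bind [Fintype Y] [DecidableEq Z] (p : X → Y) (q : Y → Z) (b : X → Bool) :
    (mergeLabels p b).bind (mergeLabels q) = mergeLabels (q ∘ p) b := by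
  unfold mergeLabels
  by_cases hp : ∃ c c' : X, c ≠ c' ∧ p c = p c' ∧ b c ∧ b c'
  · obtain ⟨c, c', hne, hpc, hc, hc'⟩ := hp
    rw [if_pos ⟨c, c', hne, hpc, hc, hc'⟩, if_pos ⟨c, c', hne, congrArg q hpc, hc, hc'⟩,
      Option.bind_none]
  rw [if_neg hp, Option.bind_some]
  simp only [decide_eq_true_eq, Function.comp_apply]
  by_cases hq : ∃ c c' : X, c ≠ c' ∧ q (p c) = q (p c') ∧ b c ∧ b c'
  · rw [if_pos hq, if_pos]
    obtain ⟨c, c', hne, hqc, hc, hc'⟩ := hq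
    refine ⟨p c, p c', fun h => hp ⟨c, c', hne, h, hc, hc'⟩, hqc, ⟨c, rfl, hc⟩, ⟨c', rfl, hc'⟩⟩
  · rw [if_neg hq, if_neg]
    · simp
    · rintro ⟨_, _, hne, hqd, ⟨c, rfl, hc⟩, ⟨c', rfl, hc'⟩⟩
      exact hq ⟨c, c', fun h => hne (congrArg p h), hqd, hc, hc'⟩

end MergeLabels

def extendByFalse {α : Type*} [DecidableEq α] {S T : Finset α} (a : ↥S → Bool) : ↥T → Bool :=
  fun x => if hx : x.1 ∈ S then a ⟨x.1, hx⟩ else false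

theorem extendByFalse_extendByFalse {α : Type*} [DecidableEq α] {S T U : Finset α} (h : S ⊆ T)
    (a : ↥S → Bool) :
    (extendByFalse (extendByFalse a : ↥T → Bool) : ↥U → Bool) = extendByFalse a := by
  funext x
  by_cases hS : x.1 ∈ S
  · simp [extendByFalse, hS, h hS]
  · simp [extendByFalse, hS]

theorem neg_one_pow_card_filter_lt_erase_antisymm {α : Type*} [DecidableEq α] {π : α → ℕ}
    (hπ : Function.Injective π) {T : Finset α} {e f : α} (he : e ∈ T) (hf : f ∈ T)
    (hef : e ≠ f) :
    (-1 : ℤ) ^ ((T.erase e).filter (π · < π e)).card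
        * (-1) ^ (((T.erase e).erase f).filter (π · < π f)).card
      + (-1) ^ ((T.erase f).filter (π · < π f)).card
        * (-1) ^ (((T.erase f).erase e).filter (π · < π e)).card = 0 := by
  rw [Finset.erase_right_comm (s := T) (a := f)]
  set S := (T.erase e).erase f
  have hTe : T.erase e = insert f S :=
    (Finset.insert_erase (Finset.mem_erase.2 ⟨hef.symm, hf⟩)).symm
  have hTf : T.erase f = insert e S := by
    rw [show S = (T.erase f).erase e from Finset.erase_right_comm,
      Finset.insert_erase (Finset.mem_erase.2 ⟨hef, he⟩)]
  have he' : e ∉ S.filter (π · < π f) := by simp [S]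
  have hf' : f ∉ S.filter (π · < π e) := by simp [S]
  rw [hTe, hTf]
  rcases (hπ.ne hef).lt_or_gt with hlt | hlt
  · simp only [Finset.filter_insert, hlt, hlt.not_gt, if_true, if_false,
      Finset.card_insert_of_notMem he', pow_succ]
    ring
  · simp only [Finset.filter_insert, hlt, hlt.not_gt, if_true, if_false,
      Finset.card_insert_of_notMem hf', pow_succ]
    ring

namespace Multigraph

variable (G : Multigraph)

theorem cycExt_cycExt {ν₀ ν₁ : ℕ} (ν₂ : ℕ) (h : ν₀ ≤ ν₁) (c : Fin ν₀ → Bool) :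
    cycExt ν₁ ν₂ (cycExt ν₀ ν₁ c) = cycExt ν₀ ν₂ c := by
  funext i
  by_cases h₀ : (i : ℕ) < ν₀
  · simp [cycExt, h₀, h₀.trans_le h]
  · simp [cycExt, h₀]

theorem boundary_comp_extendByZero {S T : Finset G.E} (h : S ⊆ T) :
    G.boundary T ∘ₗ Function.ExtendByZero.linearMap ℚ (Subtype.impEmbedding _ _ h) =
      G.boundary S := by
  refine LinearMap.ext fun φ => ?_
  have hinj := (Subtype.impEmbedding _ _ h).injective
  simp only [boundary, LinearMap.comp_apply, LinearMap.sum_apply, LinearMap.smulRight_apply,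
    LinearMap.proj_apply, Function.ExtendByZero.linearMap_apply]
  refine (Fintype.sum_of_injective _ hinj _ _ (fun x hx => ?_) (fun e => ?_)).symm
  · rw [Function.extend_apply' _ _ _ hx, Pi.zero_apply, zero_smul]
  · rw [hinj.extend_apply]
    rfl

theorem b1_mono {S T : Finset G.E} (h : S ⊆ T) : G.b1 S ≤ G.b1 T := by
  set extend := Function.ExtendByZero.linearMap ℚ (Subtype.impEmbedding _ _ h)
  have hext : Function.Injective extend :=
    Function.extend_injective (Subtype.impEmbedding _ _ h).injective 0
  have hker : LinearMap.ker (G.boundary S) = (LinearMap.ker (G.boundary T)).comap extend := by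
    rw [← G.boundary_comp_extendByZero h, LinearMap.ker_comp]
  unfold b1
  rw [hker, (Submodule.equivMapOfInjective extend hext _).finrank_eq]
  exact Submodule.finrank_mono (Submodule.map_comap_le _ _)

def compMap {S T : Finset G.E} (h : S ⊆ T) : G.Comp S → G.Comp T :=
  Quotient.map id fun _ _ hab => Relation.EqvGen.mono
    (fun _ _ ⟨e, he, hsrc, htgt⟩ => ⟨e, h he, hsrc, htgt⟩) _ _ hab

theorem compMap_comp_compMap {S T U : Finset G.E} (h : S ⊆ T) (h' : T ⊆ U) :
    G.compMap h' ∘ G.compMap h = G.compMap (h.trans h') := by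
  funext c
  induction c using Quotient.ind
  rfl

noncomputable def basisMap {S T : Finset G.E} (h : S ⊆ T) (v : G.YBasis S) :
    Option (G.YBasis T) :=
  (mergeLabels (G.compMap h) v.2.1).map
    (fun b => (extendByFalse v.1, b, cycExt (G.b1 S) (G.b1 T) v.2.2))

theorem basisStep_eq_basisMap (T : Finset G.E) (e : G.E) :
    G.basisStep T e = G.basisMap (T.erase_subset e) := by
  have hedge : G.edgeExt T e = extendByFalse := by
    funext a x
    by_cases hx : x.1 = e
    · simp [edgeExt, extendByFalse, hx]
    · simp [edgeExt, extendByFalse, hx, x.2]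
  funext v
  simp only [basisStep, basisMap, hedge]
  rfl

theorem basisMap_bind {S T U : Finset G.E} (h : S ⊆ T) (h' : T ⊆ U) (v : G.YBasis S) :
    (G.basisMap h v).bind (G.basisMap h') = G.basisMap (h.trans h') v := by
  simp only [basisMap, Option.bind_map]
  rw [← G.compMap_comp_compMap h h', ← mergeLabels_bind, Option.map_bind]
  congr 1
  funext b
  simp only [Function.comp_apply, basisMap, extendByFalse_extendByFalse h,
    cycExt_cycExt _ (G.b1_mono h)]

theorem stepMap_comp_stepMap (T : Finset G.E) (e f : G.E) :
    (G.stepMap T e).comp (G.stepMap (T.erase e) f) =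
      pushMap (G.basisMap (((T.erase e).erase_subset f).trans (T.erase_subset e))) := by
  simp only [stepMap, pushMap_comp_pushMap, basisStep_eq_basisMap, basisMap_bind]

theorem pushMap_basisMap_congr {i : ℕ} (φ : G.Cchain i) {S S' T : Finset G.E} (hS : S = S')
    (p : S.card = i) (h : S ⊆ T) :
    pushMap (G.basisMap h) (φ ⟨S, p⟩) = pushMap (G.basisMap (hS ▸ h)) (φ ⟨S', hS ▸ p⟩) := by
  subst hS
  rfl

end Multigraph

open Multigraph in
/-- `(C^i(G), d^i)` is a cochain complex: `d^{i+1} ∘ d^i = 0`. -/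
theorem diff_comp_diff (G : Multigraph) (π : G.E → ℕ) (hπ : Function.Injective π)
    (i : ℕ) : (G.diff π (i + 1)).comp (G.diff π i) = 0 := by
  refine LinearMap.ext fun φ => funext fun T => ?_
  simp only [diff, LinearMap.comp_apply, LinearMap.pi_apply, LinearMap.sum_apply,
    LinearMap.smul_apply, LinearMap.proj_apply, map_sum, map_smul, Finset.smul_sum, smul_smul,
    ← LinearMap.comp_apply (G.stepMap _ _), G.stepMap_comp_stepMap, LinearMap.zero_apply,
    Pi.zero_apply]
  rw [Finset.sum_sigma']
  refine Finset.sum_involution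
    (fun p _ => ⟨⟨p.2.1, Finset.mem_of_mem_erase p.2.2⟩,
      ⟨p.1.1, Finset.mem_erase.2 ⟨(Finset.ne_of_mem_erase p.2.2).symm, p.1.2⟩⟩⟩)
    (fun ⟨e, f⟩ _ => ?_) (fun ⟨e, f⟩ _ _ hswap => ?_) (fun _ _ => by simp) (fun _ _ => rfl)
  · have hef : e.1 ≠ f.1 := (Finset.ne_of_mem_erase f.2).symm
    dsimp only
    rw [G.pushMap_basisMap_congr φ (Finset.erase_right_comm (s := T.1) (a := f.1) (b := e.1)),
      ← add_smul,
      neg_one_pow_card_filter_lt_erase_antisymm hπ e.2 (Finset.mem_of_mem_erase f.2) hef, zero_smul]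
  · exact Finset.ne_of_mem_erase f.2 (congrArg (fun p => p.1.1) hswap)
end
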